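/- Fix a finite vertex set V = V' ∪ {r} and a partition P of V' into k non-empty parts. The generating function identity ∑_T ∏_{v ∈ V} x_v^{deg_T(v) - 1} = (∑_{v ∈ V} x_v)^{k-1} holds, where the sum on the left ranges over all r-rooted hypertrees T with vertex set V and Prüfer partition P. -/

import Mathlib

open Finset

/-- Degree of a vertex: number of hyperedges containing it. -/
def hdeg (E : Finset (Finset ℕ)) (v : ℕ) : ℕ := (E.filter (fun e => v ∈ e)).card

/-- Two vertices are adjacent if they are distinct and lie in a common hyperedge. -/
def HAdj (E : Finset (Finset ℕ)) (v w : ℕ) : Prop := v ≠ w ∧ ∃ e ∈ E, v ∈ e ∧ w ∈ e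

/-- A hypergraph is connected if any two vertices are joined by a path of
consecutively adjacent vertices. -/
def HConnected (V : Finset ℕ) (E : Finset (Finset ℕ)) : Prop :=
  ∀ v ∈ V, ∀ w ∈ V, Relation.ReflTransGen (HAdj E) v w

/-- A (finite) hypergraph on vertex set `V`: hyperedges are subsets of `V`
of cardinality at least 2. -/
def IsHypergraph (V : Finset ℕ) (E : Finset (Finset ℕ)) : Prop :=
  ∀ e ∈ E, e ⊆ V ∧ 2 ≤ e.card

/-- A finite hypertree: a connected hypergraph with
`∑ size(e) = |V| + |E| - 1`. -/
def IsHypertree (V : Finset ℕ) (E : Finset (Finset ℕ)) : Prop :=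
  IsHypergraph V E ∧ HConnected V E ∧ (∑ e ∈ E, e.card) + 1 = V.card + E.card

/-- There is a walk of length `l` from `v` to `w`. -/
def HJoined (E : Finset (Finset ℕ)) (l : ℕ) (v w : ℕ) : Prop :=
  ∃ p : ℕ → ℕ, p 0 = v ∧ p l = w ∧ ∀ i < l, HAdj E (p i) (p (i + 1))

/-- Distance between two vertices: length of a shortest joining path. -/
noncomputable def hdist (E : Finset (Finset ℕ)) (v w : ℕ) : ℕ :=
  sInf {l | HJoined E l v w}

/-- `v` is the marked vertex of the hyperedge `e` of an `r`-rooted hypertree: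
the vertex of `e` closest to the root `r`. -/
def IsMarked (E : Finset (Finset ℕ)) (r : ℕ) (e : Finset ℕ) (v : ℕ) : Prop :=
  v ∈ e ∧ ∀ w ∈ e, hdist E r v ≤ hdist E r w

/-- `P` is a partition of the finite set `S` into non-empty parts. -/
def IsPartitionOf (S : Finset ℕ) (P : Finset (Finset ℕ)) : Prop :=
  (∀ s ∈ P, s.Nonempty) ∧ (∀ s ∈ P, ∀ t ∈ P, s ≠ t → Disjoint s t) ∧
    P.biUnion id = S

/-- The hypertree `E` is `r`-rooted with vertex set `V` and has Prüfer
partition `P` (given by its reduced hyperedges). -/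
def HasPruferPartition (V : Finset ℕ) (r : ℕ) (E : Finset (Finset ℕ))
    (P : Finset (Finset ℕ)) : Prop :=
  IsHypertree V E ∧ ∃ m : Finset ℕ → ℕ, (∀ e ∈ E, IsMarked E r e (m e)) ∧
    P = E.image (fun e => e.erase (m e)) ∧
    Set.InjOn (fun e : Finset ℕ => e.erase (m e)) ↑E

/-!
Each hyperedge of an `r`-rooted hypertree is `insert (f p) p`, where `p` is its reduced hyperedge
and `f p` its vertex closest to `r`; think of the part `p` as attached to the vertex `f p`.
In a hypertree the vertex of a hyperedge closest to the root is unique (if there were two,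
deleting one of them from `e` would keep the hypergraph connected while lowering
`∑ e, (#e - 1) = #V - 1`), and every other vertex of `e` is one step farther from the root. Hence
hypertrees with Prüfer partition `P` correspond bijectively to maps `f` admitting a depth function
that increases by one along each attachment, i.e. to forests of parts rooted at `r`, and
`deg v - 1` counts the parts attached to `v` (one fewer at the root).

The weighted count of such forests is a Cayley-type formula: peeling off the layer `C` of parts
attached directly to the roots `R₀` leaves a forest on `Q \ C` rooted in the vertices of `C`, and
induction gives `∑ f, ∏ p, x (f p) = a * (a + b) ^ (#Q - 1)` with `a = ∑ R₀ x`, `b = ∑ ⋃Q x`.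
The same peeling at `r` produces `(∑ V x) ^ (k - 1)`.
-/

section Walks

variable {E : Finset (Finset ℕ)}

theorem HAdj.symm {v w : ℕ} (h : HAdj E v w) : HAdj E w v :=
  ⟨h.1.symm, h.2.imp fun _ ⟨he, hv, hw⟩ => ⟨he, hw, hv⟩⟩

instance HAdj.instSymm : Std.Symm (HAdj E) := ⟨fun _ _ => HAdj.symm⟩

theorem hJoined_zero_iff {v w : ℕ} : HJoined E 0 v w ↔ v = w :=
  ⟨fun ⟨_, h0, hl, _⟩ => h0.symm.trans hl, fun h => ⟨fun _ => w, h.symm, rfl, by omega⟩⟩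

theorem hJoined_succ_iff {l : ℕ} {v w : ℕ} :
    HJoined E (l + 1) v w ↔ ∃ u, HJoined E l v u ∧ HAdj E u w := by
  constructor
  · rintro ⟨p, h0, hl, hp⟩
    exact ⟨p l, ⟨p, h0, rfl, fun i hi => hp i (by omega)⟩, hl ▸ hp l (by omega)⟩
  · rintro ⟨u, ⟨p, h0, hl, hp⟩, hu⟩
    refine ⟨Function.update p (l + 1) w, by simp [h0], by simp, fun i hi => ?_⟩
    rcases Nat.lt_succ_iff_lt_or_eq.mp hi with hi | rfl
    · simpa [Function.update_of_ne (show i ≠ l + 1 by omega),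
        Function.update_of_ne (show i + 1 ≠ l + 1 by omega)] using hp i hi
    · simpa [hl] using hu

theorem reflTransGen_iff_exists_hJoined {v w : ℕ} :
    Relation.ReflTransGen (HAdj E) v w ↔ ∃ l, HJoined E l v w := by
  constructor
  · intro h
    induction h with
    | refl => exact ⟨0, hJoined_zero_iff.mpr rfl⟩
    | tail _ hadj ih =>
      obtain ⟨l, hl⟩ := ih
      exact ⟨l + 1, hJoined_succ_iff.mpr ⟨_, hl, hadj⟩⟩
  · rintro ⟨l, hl⟩
    induction l generalizing w with
    | zero => rw [hJoined_zero_iff.mp hl]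
    | succ l ih =>
      obtain ⟨u, hu, hadj⟩ := hJoined_succ_iff.mp hl
      exact (ih hu).tail hadj

theorem hdist_le {l : ℕ} {v w : ℕ} (h : HJoined E l v w) : hdist E v w ≤ l :=
  Nat.sInf_le h

theorem hJoined_hdist {v w : ℕ} (h : Relation.ReflTransGen (HAdj E) v w) :
    HJoined E (hdist E v w) v w :=
  Nat.sInf_mem (reflTransGen_iff_exists_hJoined.mp h)

theorem hdist_self (v : ℕ) : hdist E v v = 0 :=
  Nat.le_zero.mp (hdist_le (hJoined_zero_iff.mpr rfl))

theorem hdist_le_hdist_add_one {r u v : ℕ} (hu : Relation.ReflTransGen (HAdj E) r u)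
    (huv : HAdj E u v) : hdist E r v ≤ hdist E r u + 1 :=
  hdist_le (hJoined_succ_iff.mpr ⟨u, hJoined_hdist hu, huv⟩)

theorem exists_hAdj_hdist_add_one {r v : ℕ} (hv : Relation.ReflTransGen (HAdj E) r v)
    (hvr : v ≠ r) : ∃ u, Relation.ReflTransGen (HAdj E) r u ∧ HAdj E u v ∧
      hdist E r u + 1 = hdist E r v := by
  have hJ := hJoined_hdist hv
  obtain ⟨l, hl⟩ := Nat.exists_eq_succ_of_ne_zero (n := hdist E r v) fun h0 =>
    hvr (hJoined_zero_iff.mp (h0 ▸ hJ)).symm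
  rw [hl] at hJ
  obtain ⟨u, hu, huv⟩ := hJoined_succ_iff.mp hJ
  have hru := reflTransGen_iff_exists_hJoined.mpr ⟨l, hu⟩
  have := hdist_le hu
  have := hdist_le_hdist_add_one hru huv
  exact ⟨u, hru, huv, by omega⟩

theorem le_add_hdist {D : ℕ → ℕ} (hD : ∀ a b, HAdj E a b → D b ≤ D a + 1) {v w : ℕ}
    (h : Relation.ReflTransGen (HAdj E) v w) : D w ≤ D v + hdist E v w := by
  suffices ∀ l w, HJoined E l v w → D w ≤ D v + l from this _ w (hJoined_hdist h)
  intro l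
  induction l with
  | zero => intro w hw; simp [← hJoined_zero_iff.mp hw]
  | succ l ih =>
    intro w hw
    obtain ⟨u, hu, huw⟩ := hJoined_succ_iff.mp hw
    have := ih u hu
    have := hD u w huw
    omega

end Walks

section Hypertrees

variable {V : Finset ℕ} {E : Finset (Finset ℕ)} {r : ℕ}

theorem reflTransGen_of_mem_of_mem {e : Finset ℕ} {z u : ℕ}
    (hz : Relation.ReflTransGen (HAdj E) r z) (he : e ∈ E) (hze : z ∈ e) (hue : u ∈ e) :
    Relation.ReflTransGen (HAdj E) r u := by
  by_cases hzu : z = u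
  · exact hzu ▸ hz
  · exact hz.tail ⟨hzu, e, he, hze, hue⟩

/-- Each vertex `v ≠ r` is charged to the pair `(e, v)`, where `e` is the last hyperedge of a
shortest walk from `r` to `v`; then `v` is not the chosen closest vertex of `e`. -/
theorem card_le_sum_card_sub_one_add_one (hE : ∀ e ∈ E, e.Nonempty)
    (hV : ∀ v ∈ V, Relation.ReflTransGen (HAdj E) r v) :
    #V ≤ ∑ e ∈ E, (#e - 1) + 1 := by
  choose! c hcmem hcmin using fun e (he : e ∈ E) => e.exists_min_image (hdist E r) (hE e he)
  have hlast : ∀ v ∈ V.erase r, ∃ e ∈ E, v ∈ e ∧ ∃ u ∈ e, hdist E r u < hdist E r v := by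
    intro v hv
    obtain ⟨hvr, hvV⟩ := mem_erase.mp hv
    obtain ⟨u, -, ⟨-, e, he, hue, hve⟩, hd⟩ := exists_hAdj_hdist_add_one (hV v hvV) hvr
    exact ⟨e, he, hve, u, hue, by omega⟩
  choose! last hlastE hvlast hlastlt using hlast
  have hmaps : Set.MapsTo (fun v => (⟨last v, v⟩ : Σ _ : Finset ℕ, ℕ)) (V.erase r)
      (E.sigma fun e => e.erase (c e)) := by
    intro v hv
    obtain ⟨u, hu, hlt⟩ := hlastlt v hv
    have := hcmin _ (hlastE v hv) u hu
    refine mem_sigma.mpr ⟨hlastE v hv, mem_erase.mpr ⟨fun h => ?_, hvlast v hv⟩⟩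
    simp only at h
    rw [← h] at this
    omega
  calc #V ≤ #(V.erase r) + 1 := by have := pred_card_le_card_erase (s := V) (a := r); omega
    _ ≤ #(E.sigma fun e => e.erase (c e)) + 1 := by
        gcongr
        exact card_le_card_of_injOn _ hmaps fun v _ w _ h => congrArg Sigma.snd h
    _ = ∑ e ∈ E, (#e - 1) + 1 := by
        rw [card_sigma]
        exact congrArg (· + 1) (sum_congr rfl fun e he => card_erase_of_mem (hcmem e he))

theorem IsHypertree.sum_card_sub_one_add_one (hT : IsHypertree V E) :
    ∑ e ∈ E, (#e - 1) + 1 = #V := by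
  obtain ⟨hH, -, hsum⟩ := hT
  have : ∑ e ∈ E, (#e - 1) + #E = ∑ e ∈ E, #e := by
    rw [card_eq_sum_ones, ← sum_add_distrib]
    exact sum_congr rfl fun e he => by have := (hH e he).2; omega
  omega

theorem reflTransGen_insert_erase_of_isMarked {e : Finset ℕ} {u v : ℕ} (he : e ∈ E)
    (hu : IsMarked E r e u) (hv : IsMarked E r e v) (huv : u ≠ v) {y : ℕ}
    (hy : Relation.ReflTransGen (HAdj E) r y) :
    Relation.ReflTransGen (HAdj (insert (e.erase v) (E.erase e))) r y := by
  induction hn : hdist E r y using Nat.strong_induction_on generalizing y with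
  | _ n ih =>
  by_cases hyr : y = r
  · rw [hyr]
  obtain ⟨z, hz, ⟨hzy, f, hf, hzf, hyf⟩, hd⟩ := exists_hAdj_hdist_add_one hy hyr
  by_cases hfe : f = e
  · subst hfe
    have := hu.2 z hzf
    have := hv.2 z hzf
    have hyu : y ≠ u := by rintro rfl; omega
    have hyv : y ≠ v := by rintro rfl; omega
    have hru := ih _ (by omega) (reflTransGen_of_mem_of_mem hz hf hzf hu.1) rfl
    exact hru.tail ⟨hyu.symm, f.erase v, mem_insert_self _ _, mem_erase.mpr ⟨huv, hu.1⟩,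
      mem_erase.mpr ⟨hyv, hyf⟩⟩
  · exact (ih _ (by omega) hz rfl).tail
      ⟨hzy, f, mem_insert_of_mem (mem_erase.mpr ⟨hfe, hf⟩), hzf, hyf⟩

theorem IsHypertree.eq_of_isMarked (hT : IsHypertree V E) (hr : r ∈ V) {e : Finset ℕ}
    (he : e ∈ E) {u v : ℕ} (hu : IsMarked E r e u) (hv : IsMarked E r e v) : u = v := by
  by_contra huv
  have hcard : ∀ f ∈ E, 2 ≤ #f := fun f hf => (hT.1 f hf).2
  have hne : ∀ f ∈ insert (e.erase v) (E.erase e), f.Nonempty := by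
    intro f hf
    rcases mem_insert.mp hf with rfl | hf
    · exact ⟨u, mem_erase.mpr ⟨huv, hu.1⟩⟩
    · exact card_pos.mp (by have := hcard f (mem_of_mem_erase hf); omega)
  have hreach := card_le_sum_card_sub_one_add_one hne fun y hy =>
    reflTransGen_insert_erase_of_isMarked he hu hv huv (hT.2.1 r hr y hy)
  have hsplit := add_sum_erase E (fun f => #f - 1) he
  have hsum : ∑ f ∈ insert (e.erase v) (E.erase e), (#f - 1) ≤
      (#e - 2) + ∑ f ∈ E.erase e, (#f - 1) := by
    have hve := card_erase_of_mem hv.1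
    by_cases hmem : e.erase v ∈ E.erase e
    · rw [insert_eq_of_mem hmem]; omega
    · rw [sum_insert hmem]; omega
  have := hT.sum_card_sub_one_add_one
  have := hcard e he
  omega

theorem IsHypertree.hdist_eq_add_one_of_isMarked (hT : IsHypertree V E) (hr : r ∈ V)
    {e : Finset ℕ} (he : e ∈ E) {u v : ℕ} (hu : IsMarked E r e u) (hv : v ∈ e) (hvu : v ≠ u) :
    hdist E r v = hdist E r u + 1 := by
  have h1 := hdist_le_hdist_add_one (hT.2.1 r hr u ((hT.1 e he).1 hu.1))
    ⟨hvu.symm, e, he, hu.1, hv⟩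
  have h2 : hdist E r u ≠ hdist E r v := fun h =>
    hvu (hT.eq_of_isMarked hr he ⟨hv, fun w hw => h ▸ hu.2 w hw⟩ hu)
  have := hu.2 v hv
  omega

end Hypertrees

section Binomial

variable {β R : Type*} [CommSemiring R] [DecidableEq β]

theorem sum_powerset_filter_mem_apply_card {M : Type*} [AddCommMonoid M] {Q : Finset β} {p : β}
    (hp : p ∈ Q) (φ : ℕ → M) :
    ∑ C ∈ Q.powerset with p ∈ C, φ #C = ∑ j ∈ range #Q, (#Q - 1).choose j • φ (j + 1) := by
  obtain ⟨Q, hpQ, rfl⟩ : ∃ Q', p ∉ Q' ∧ Q = insert p Q' :=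
    ⟨Q.erase p, notMem_erase p Q, (insert_erase hp).symm⟩
  have hout : ∀ C ∈ Q.powerset, p ∉ C := fun C hC h => hpQ (mem_powerset.mp hC h)
  rw [sum_filter, sum_powerset_insert hpQ, card_insert_of_notMem hpQ, Nat.add_sub_cancel,
    ← sum_powerset_apply_card, sum_eq_zero fun C hC => if_neg (hout C hC), zero_add]
  exact sum_congr rfl fun C hC => by
    rw [if_pos (mem_insert_self p C), card_insert_of_notMem (hout C hC)]

theorem sum_powerset_mul_sum (Q : Finset β) (g : ℕ → R) (w : β → R) :
    ∑ C ∈ Q.powerset, g #C * ∑ p ∈ C, w p =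
      (∑ p ∈ Q, w p) * ∑ j ∈ range #Q, (#Q - 1).choose j • g (j + 1) := by
  calc ∑ C ∈ Q.powerset, g #C * ∑ p ∈ C, w p
      = ∑ C ∈ Q.powerset, ∑ p ∈ C, g #C * w p := by simp only [mul_sum]
    _ = ∑ p ∈ Q, ∑ C ∈ Q.powerset with p ∈ C, g #C * w p := by
        refine sum_comm' fun C p => ?_
        simp only [mem_filter, mem_powerset]
        exact ⟨fun ⟨hCQ, hp⟩ => ⟨⟨hCQ, hp⟩, hCQ hp⟩, fun ⟨⟨hCQ, hp⟩, _⟩ => ⟨hCQ, hp⟩⟩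
    _ = _ := by
        rw [sum_mul]
        refine sum_congr rfl fun p hp => ?_
        rw [← sum_powerset_filter_mem_apply_card hp, mul_sum]
        exact sum_congr rfl fun C _ => mul_comm _ _

theorem add_pow_eq_pow_add_mul_sum (s Y : R) (m : ℕ) :
    (s + Y) ^ m = s ^ m + Y * ∑ j ∈ range m, (m.choose j : R) * (s ^ j * Y ^ (m - 1 - j)) := by
  rw [add_pow, sum_range_succ, Nat.choose_self, Nat.sub_self, pow_zero, mul_one, Nat.cast_one,
    mul_one, add_comm, mul_sum]
  refine congrArg (s ^ m + ·) (sum_congr rfl fun j hj => ?_)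
  rw [show m - j = m - 1 - j + 1 by have := mem_range.mp hj; omega, pow_succ]
  ring

theorem sum_powerset_pow_mul_sum_eq_add_pow (Q : Finset β) (hQ : Q.Nonempty) (w : β → R)
    (s : R) :
    ∑ C ∈ Q.powerset with C.Nonempty, s ^ (#C - 1) *
        (if C = Q then 1 else (∑ p ∈ C, w p) * (∑ p ∈ Q, w p) ^ (#Q - #C - 1)) =
      (s + ∑ p ∈ Q, w p) ^ (#Q - 1) := by
  set Y := ∑ p ∈ Q, w p
  obtain ⟨m, hm⟩ : ∃ m, #Q = m + 1 := Nat.exists_eq_succ_of_ne_zero (card_pos.mpr hQ).ne'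
  -- The proper layers `C ⊂ Q` are encoded through `#C < #Q`; `C = ∅` contributes nothing.
  let g : ℕ → R := fun c => if c < #Q then s ^ (c - 1) * Y ^ (#Q - c - 1) else 0
  have hsplit : ∑ C ∈ Q.powerset with C.Nonempty, s ^ (#C - 1) *
      (if C = Q then 1 else (∑ p ∈ C, w p) * Y ^ (#Q - #C - 1)) =
      s ^ m + ∑ C ∈ Q.powerset, g #C * ∑ p ∈ C, w p := by
    rw [← add_sum_erase _ _ (mem_filter.mpr ⟨mem_powerset_self Q, hQ⟩), if_pos rfl, mul_one,
      show #Q - 1 = m by omega]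
    refine congrArg _ ((sum_congr rfl fun C hC => ?_).trans
      (sum_subset (fun C hC => ?_) fun C hC hC' => ?_))
    · obtain ⟨hCQ, hCm⟩ := mem_erase.mp hC
      have hlt : #C < #Q := card_lt_card (ssubset_of_subset_of_ne
        (mem_powerset.mp (mem_filter.mp hCm).1) hCQ)
      simp only [g, if_neg hCQ, if_pos hlt]
      ring
    · exact (mem_filter.mp (mem_of_mem_erase hC)).1
    · by_cases hCQ : C = Q
      · simp [g, hCQ]
      · have hCe : C = ∅ := not_nonempty_iff_eq_empty.mp fun hne =>
          hC' (mem_erase.mpr ⟨hCQ, mem_filter.mpr ⟨hC, hne⟩⟩)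
        simp [hCe]
  rw [hsplit, sum_powerset_mul_sum, hm, Nat.add_sub_cancel, add_pow_eq_pow_add_mul_sum,
    sum_range_succ]
  simp only [g, hm, lt_irrefl, if_false, smul_zero, add_zero, nsmul_eq_mul]
  refine congrArg (fun t => s ^ m + Y * t) (sum_congr rfl fun j hj => ?_)
  have hj : j < m := mem_range.mp hj
  rw [if_pos (by omega), Nat.add_sub_cancel, show m + 1 - (j + 1) - 1 = m - 1 - j by omega]

end Binomial

section Piecewise

variable {α : Type*} [DecidableEq α] {Q : Finset (Finset α)}

theorem biUnion_union_biUnion_sdiff {C : Finset (Finset α)} (hC : C ⊆ Q) :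
    C.biUnion id ∪ (Q \ C).biUnion id = Q.biUnion id := by
  rw [← union_biUnion, union_sdiff_of_subset hC]

theorem disjoint_biUnion_sdiff (hQd : (Q : Set (Finset α)).PairwiseDisjoint id)
    {C : Finset (Finset α)} (hC : C ⊆ Q) : Disjoint ((Q \ C).biUnion id) (C.biUnion id) :=
  (disjoint_biUnion_left _ _ _).mpr fun _ hp => (disjoint_biUnion_right _ _ _).mpr fun _ hq =>
    hQd (mem_sdiff.mp hp).1 (hC hq) fun h => (mem_sdiff.mp hp).2 (h ▸ hq)

theorem filter_piecewise_eq {C : Finset (Finset α)} {g f : Finset α → α} (S : α → Prop)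
    [DecidablePred S] (hC : C ⊆ Q) (hg : ∀ p ∈ C, S (g p)) (hf : ∀ p ∈ Q \ C, ¬ S (f p)) :
    Q.filter (fun p => S (C.piecewise g f p)) = C := by
  ext p
  rw [mem_filter]
  by_cases hp : p ∈ C
  · simp [hp, hC hp, hg p hp]
  · simp only [hp, iff_false, not_and, piecewise_eq_of_notMem _ _ _ hp]
    exact fun hpQ => hf p (mem_sdiff.mpr ⟨hpQ, hp⟩)

theorem prod_piecewise_apply {M : Type*} [CommMonoid M] (x : α → M) {C : Finset (Finset α)}
    (hC : C ⊆ Q) (g f : Finset α → α) :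
    ∏ p ∈ Q, x (C.piecewise g f p) = (∏ p ∈ C, x (g p)) * ∏ p ∈ Q \ C, x (f p) := by
  rw [← prod_sdiff hC, mul_comm]
  congr 1
  · exact prod_congr rfl fun p hp => by rw [piecewise_eq_of_mem _ _ _ hp]
  · exact prod_congr rfl fun p hp => by rw [piecewise_eq_of_notMem _ _ _ (mem_sdiff.mp hp).2]

end Piecewise

section Attachments

variable {α : Type*} [DecidableEq α] [Inhabited α]

open scoped Classical in
noncomputable def funsOn (C : Finset (Finset α)) (U : Finset α) : Finset (Finset α → α) :=
  (C.pi fun _ => U).image fun g p => if h : p ∈ C then g p h else default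

theorem mem_funsOn {C : Finset (Finset α)} {U : Finset α} {f : Finset α → α} :
    f ∈ funsOn C U ↔ (∀ p ∉ C, f p = default) ∧ ∀ p ∈ C, f p ∈ U := by
  simp only [funsOn, mem_image, mem_pi]
  constructor
  · rintro ⟨g, hg, rfl⟩
    exact ⟨fun p hp => dif_neg hp, fun p hp => by simpa [hp] using hg p hp⟩
  · rintro ⟨hout, hin⟩
    refine ⟨fun p _ => f p, hin, funext fun p => ?_⟩
    by_cases hp : p ∈ C
    · exact dif_pos hp
    · rw [dif_neg hp, hout p hp]

theorem sum_prod_funsOn {R : Type*} [CommSemiring R] (x : α → R) (C : Finset (Finset α))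
    (U : Finset α) : ∑ g ∈ funsOn C U, ∏ p ∈ C, x (g p) = (∑ v ∈ U, x v) ^ #C := by
  classical
  have hinj : Set.InjOn (fun (g : ∀ p ∈ C, α) p => if h : p ∈ C then g p h else default)
      (C.pi fun _ => U) := fun g₁ _ g₂ _ h => funext₂ fun p hp => by
    simpa [hp] using congrFun h p
  calc ∑ g ∈ funsOn C U, ∏ p ∈ C, x (g p)
      = ∑ g ∈ C.pi fun _ => U, ∏ p ∈ C.attach, x (g p.1 p.2) := by
        rw [funsOn, sum_image hinj]
        refine sum_congr rfl fun g _ => ?_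
        rw [← prod_attach C]
        simp
    _ = ∏ p ∈ C, ∑ v ∈ U, x v := (prod_sum C (fun _ => U) fun _ v => x v).symm
    _ = (∑ v ∈ U, x v) ^ #C := prod_const _

theorem card_funsOn (C : Finset (Finset α)) (U : Finset α) : #(funsOn C U) = #U ^ #C := by
  simpa using sum_prod_funsOn (R := ℕ) (fun _ => 1) C U

open scoped Classical in
/-- `f` attaches each part `p` of `Q` to the vertex `f p`; the depth function `D` certifies
that the hyperedges `insert (f p) p` form a forest rooted in `R₀`. -/
noncomputable def attachments (R₀ : Finset α) (Q : Finset (Finset α)) :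
    Finset (Finset α → α) :=
  (funsOn Q (R₀ ∪ Q.biUnion id)).filter fun f =>
    ∃ D : α → ℕ, (∀ v ∈ R₀, D v = 0) ∧ ∀ p ∈ Q, ∀ v ∈ p, D v = D (f p) + 1

variable {R₀ : Finset α} {Q : Finset (Finset α)}

open scoped Classical in
theorem mem_attachments {f : Finset α → α} :
    f ∈ attachments R₀ Q ↔ (∀ p ∉ Q, f p = default) ∧ (∀ p ∈ Q, f p ∈ R₀ ∪ Q.biUnion id) ∧
      ∃ D : α → ℕ, (∀ v ∈ R₀, D v = 0) ∧ ∀ p ∈ Q, ∀ v ∈ p, D v = D (f p) + 1 := by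
  rw [attachments, mem_filter, mem_funsOn, and_assoc]

theorem attachments_empty : attachments R₀ ∅ = {fun _ => default} := by
  ext f
  simp only [mem_attachments, mem_singleton, notMem_empty]
  refine ⟨fun ⟨hf, _⟩ => funext fun p => hf p not_false, ?_⟩
  rintro rfl
  exact ⟨fun _ _ => rfl, fun _ => False.elim, fun _ => 0, fun _ _ => rfl, fun _ => False.elim⟩

/-- A part of minimal depth is attached to `R₀`. -/
theorem filter_mem_nonempty_of_mem_attachments (hQ : Q.Nonempty)
    {f : Finset α → α} (hf : f ∈ attachments R₀ Q) : (Q.filter (f · ∈ R₀)).Nonempty := by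
  obtain ⟨-, hfU, D, -, hD⟩ := mem_attachments.mp hf
  obtain ⟨p, hp, hmin⟩ := Q.exists_min_image (fun p => D (f p)) hQ
  refine ⟨p, mem_filter.mpr ⟨hp, ?_⟩⟩
  by_contra hpR
  obtain ⟨q, hq, hfq⟩ := mem_biUnion.mp ((mem_union.mp (hfU p hp)).resolve_left hpR)
  have := hD q hq (f p) hfq
  have := hmin q hq
  omega

theorem piecewise_mem_attachments_sdiff {f : Finset α → α} (hf : f ∈ attachments R₀ Q) :
    let C := Q.filter (f · ∈ R₀)
    (Q \ C).piecewise f (fun _ => default) ∈ attachments (C.biUnion id) (Q \ C) := by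
  intro C
  obtain ⟨-, hfU, D, hD0, hD⟩ := mem_attachments.mp hf
  have hout : ∀ p ∈ Q \ C, f p ∈ Q.biUnion id := fun p hp => by
    obtain ⟨hpQ, hpC⟩ := mem_sdiff.mp hp
    exact (mem_union.mp (hfU p hpQ)).resolve_left fun h => hpC (mem_filter.mpr ⟨hpQ, h⟩)
  have hdeep : ∀ v ∈ Q.biUnion id, 1 ≤ D v := fun v hv => by
    obtain ⟨q, hq, hvq⟩ := mem_biUnion.mp hv
    rw [hD q hq v hvq]; omega
  refine mem_attachments.mpr ⟨fun p hp => piecewise_eq_of_notMem _ _ _ hp,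
    fun p hp => ?_, fun v => D v - 1, fun v hv => ?_, fun p hp v hv => ?_⟩
  · rw [piecewise_eq_of_mem _ _ _ hp, biUnion_union_biUnion_sdiff (filter_subset _ _)]
    exact hout p hp
  · obtain ⟨q, hq, hvq⟩ := mem_biUnion.mp hv
    obtain ⟨hqQ, hfq⟩ := mem_filter.mp hq
    have := hD q hqQ v hvq
    have := hD0 _ hfq
    simp only
    omega
  · show D v - 1 = D (_) - 1 + 1
    rw [piecewise_eq_of_mem _ _ _ hp]
    have := hD p (mem_sdiff.mp hp).1 v hv
    have := hdeep _ (hout p hp)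
    omega

theorem piecewise_mem_attachments (hR₀ : Disjoint (Q.biUnion id) R₀) {C : Finset (Finset α)}
    (hC : C ⊆ Q) {g f : Finset α → α} (hg : g ∈ funsOn C R₀)
    (hf : f ∈ attachments (C.biUnion id) (Q \ C)) : C.piecewise g f ∈ attachments R₀ Q := by
  obtain ⟨hg0, hgR⟩ := mem_funsOn.mp hg
  obtain ⟨hf0, hfU, D, hD0, hD⟩ := mem_attachments.mp hf
  have hfQ : ∀ p ∈ Q \ C, f p ∈ Q.biUnion id := fun p hp => by
    simpa [biUnion_union_biUnion_sdiff hC] using hfU p hp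
  refine mem_attachments.mpr ⟨fun p hp => ?_, fun p hp => ?_,
    fun v => if v ∈ R₀ then 0 else D v + 1, fun v hv => if_pos hv, fun p hp v hv => ?_⟩
  · rw [piecewise_eq_of_notMem _ _ _ fun h => hp (hC h)]
    exact hf0 p fun h => hp (mem_sdiff.mp h).1
  · by_cases hpC : p ∈ C
    · simp [hpC, hgR p hpC]
    · rw [piecewise_eq_of_notMem _ _ _ hpC]
      exact mem_union_right _ (hfQ p (mem_sdiff.mpr ⟨hp, hpC⟩))
  · have hvR : v ∉ R₀ := disjoint_left.mp hR₀ (mem_biUnion.mpr ⟨p, hp, hv⟩)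
    simp only [if_neg hvR]
    by_cases hpC : p ∈ C
    · rw [piecewise_eq_of_mem _ _ _ hpC, if_pos (hgR p hpC),
        hD0 v (mem_biUnion.mpr ⟨p, hpC, hv⟩)]
    · have hpQC : p ∈ Q \ C := mem_sdiff.mpr ⟨hp, hpC⟩
      rw [piecewise_eq_of_notMem _ _ _ hpC, if_neg (disjoint_left.mp hR₀ (hfQ p hpQC)),
        hD p hpQC v hv]

theorem piecewise_piecewise_sdiff (C : Finset (Finset α)) {f : Finset α → α}
    (hf : ∀ p ∉ Q, f p = default) :
    C.piecewise (C.piecewise f fun _ => default) ((Q \ C).piecewise f fun _ => default) = f := by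
  funext p
  by_cases hpC : p ∈ C
  · simp [hpC]
  · by_cases hpQ : p ∈ Q
    · simp [hpC, hpQ]
    · simp [hpC, hpQ, hf p hpQ]

/-- An attachment splits into the layer `C` of parts attached to `R₀` and an attachment of the
remaining parts to the vertices of `C`. -/
theorem sum_attachments_eq_sum_layers {M : Type*} [AddCommMonoid M]
    (F : (Finset α → α) → M) (hQ : Q.Nonempty) (hR₀ : Disjoint (Q.biUnion id) R₀) :
    ∑ f ∈ attachments R₀ Q, F f =
      ∑ C ∈ Q.powerset.filter Finset.Nonempty, ∑ g ∈ funsOn C R₀,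
        ∑ f ∈ attachments (C.biUnion id) (Q \ C), F (C.piecewise g f) := by
  have hleft : ∀ f ∈ attachments R₀ Q, (Q.filter (f · ∈ R₀)).piecewise
      ((Q.filter (f · ∈ R₀)).piecewise f fun _ => default)
      ((Q \ Q.filter (f · ∈ R₀)).piecewise f fun _ => default) = f := fun f hf =>
    piecewise_piecewise_sdiff _ (mem_attachments.mp hf).1
  simp_rw [← sum_product']
  rw [sum_sigma']
  refine sum_nbij' (fun f => ⟨Q.filter (f · ∈ R₀),
      (Q.filter (f · ∈ R₀)).piecewise f (fun _ => default),
      (Q \ Q.filter (f · ∈ R₀)).piecewise f (fun _ => default)⟩)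
    (fun t => t.1.piecewise t.2.1 t.2.2) (fun f hf => ?_) (fun t ht => ?_) hleft
    (fun t ht => ?_) (fun f hf => by rw [hleft f hf])
  · simp only [mem_sigma, mem_filter, mem_powerset, mem_product]
    refine ⟨⟨filter_subset _ _, filter_mem_nonempty_of_mem_attachments hQ hf⟩,
      mem_funsOn.mpr ⟨fun p hp => piecewise_eq_of_notMem _ _ _ hp, fun p hp => ?_⟩,
      piecewise_mem_attachments_sdiff hf⟩
    rw [piecewise_eq_of_mem _ _ _ hp]
    exact (mem_filter.mp hp).2
  · simp only [mem_sigma, mem_filter, mem_powerset, mem_product] at ht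
    exact piecewise_mem_attachments hR₀ ht.1.1 ht.2.1 ht.2.2
  · obtain ⟨C, g, f⟩ := t
    simp only [mem_sigma, mem_filter, mem_powerset, mem_product] at ht
    obtain ⟨⟨hCQ, -⟩, hg, hf⟩ := ht
    obtain ⟨hg0, hgR⟩ := mem_funsOn.mp hg
    obtain ⟨hf0, hfU, -⟩ := mem_attachments.mp hf
    have hC : Q.filter (C.piecewise g f · ∈ R₀) = C := by
      refine filter_piecewise_eq (· ∈ R₀) hCQ hgR fun p hp => disjoint_left.mp hR₀ ?_
      simpa [biUnion_union_biUnion_sdiff hCQ] using hfU p hp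
    rw [hC]
    congr 2 <;> funext p
    · by_cases hp : p ∈ C <;> simp [hp, hg0]
    · by_cases hp : p ∈ Q \ C
      · simp [hp, (mem_sdiff.mp hp).2]
      · simp [hp, hf0]

variable {R : Type*} [CommSemiring R]

theorem sum_pow_mul_sum_attachments (x : α → R) (a : R) (hQ : Q.Nonempty)
    (hQd : (Q : Set (Finset α)).PairwiseDisjoint id)
    (h : ∀ C ⊆ Q, C.Nonempty → C ≠ Q →
      ∑ f ∈ attachments (C.biUnion id) (Q \ C), ∏ p ∈ Q \ C, x (f p) =
        (∑ v ∈ C.biUnion id, x v) *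
          (∑ v ∈ C.biUnion id ∪ (Q \ C).biUnion id, x v) ^ (#(Q \ C) - 1)) :
    ∑ C ∈ Q.powerset with C.Nonempty,
        a ^ (#C - 1) * ∑ f ∈ attachments (C.biUnion id) (Q \ C), ∏ p ∈ Q \ C, x (f p) =
      (a + ∑ v ∈ Q.biUnion id, x v) ^ (#Q - 1) := by
  have hsum : ∀ C ⊆ Q, ∑ v ∈ C.biUnion id, x v = ∑ p ∈ C, ∑ v ∈ p, x v := fun C hC =>
    sum_biUnion (hQd.subset (coe_subset.mpr hC))
  rw [hsum Q subset_rfl, ← sum_powerset_pow_mul_sum_eq_add_pow Q hQ]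
  refine sum_congr rfl fun C hC => ?_
  obtain ⟨hCQ, hCne⟩ := mem_filter.mp hC
  rw [mem_powerset] at hCQ
  congr 1
  split_ifs with hCeq
  · simp [hCeq, attachments_empty]
  · rw [h C hCQ hCne hCeq, biUnion_union_biUnion_sdiff hCQ, hsum C hCQ, hsum Q subset_rfl,
      card_sdiff_of_subset hCQ]

theorem sum_prod_attachments (x : α → R) (hQ : Q.Nonempty)
    (hQd : (Q : Set (Finset α)).PairwiseDisjoint id) (hR₀ : Disjoint (Q.biUnion id) R₀) :
    ∑ f ∈ attachments R₀ Q, ∏ p ∈ Q, x (f p) =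
      (∑ v ∈ R₀, x v) * (∑ v ∈ R₀ ∪ Q.biUnion id, x v) ^ (#Q - 1) := by
  induction Q using Finset.strongInduction generalizing R₀ with
  | H Q ih =>
  rw [sum_attachments_eq_sum_layers _ hQ hR₀, sum_union hR₀.symm,
    ← sum_pow_mul_sum_attachments x _ hQ hQd fun C hCQ hCne hCeq =>
      ih _ (sdiff_ssubset hCQ hCne) (sdiff_nonempty.mpr fun h => hCeq (hCQ.antisymm h))
        (hQd.subset (coe_subset.mpr sdiff_subset)) (disjoint_biUnion_sdiff hQd hCQ), mul_sum]
  refine sum_congr rfl fun C hC => ?_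
  obtain ⟨hCQ, hCne⟩ := mem_filter.mp hC
  simp_rw [prod_piecewise_apply x (mem_powerset.mp hCQ)]
  rw [← sum_mul_sum, sum_prod_funsOn, ← mul_assoc, mul_pow_sub_one (card_pos.mpr hCne).ne']

theorem sum_pow_mul_prod_attachments_singleton (x : α → R) (r : α)
    (hQd : (Q : Set (Finset α)).PairwiseDisjoint id) (hr : Disjoint (Q.biUnion id) {r}) :
    ∑ f ∈ attachments {r} Q, x r ^ (#{p ∈ Q | f p = r} - 1) * ∏ p ∈ Q with f p ≠ r, x (f p) =
      (x r + ∑ v ∈ Q.biUnion id, x v) ^ (#Q - 1) := by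
  rcases Q.eq_empty_or_nonempty with rfl | hQ
  · simp [attachments_empty]
  rw [sum_attachments_eq_sum_layers _ hQ hr, ← sum_pow_mul_sum_attachments x _ hQ hQd
    fun C hCQ hCne hCeq => sum_prod_attachments x
      (sdiff_nonempty.mpr fun h => hCeq (hCQ.antisymm h))
      (hQd.subset (coe_subset.mpr sdiff_subset)) (disjoint_biUnion_sdiff hQd hCQ)]
  refine sum_congr rfl fun C hC => ?_
  have hCQ := mem_powerset.mp (mem_filter.mp hC).1
  have hlayer : ∀ g ∈ funsOn C {r}, ∀ f ∈ attachments (C.biUnion id) (Q \ C),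
      x r ^ (#{p ∈ Q | C.piecewise g f p = r} - 1) *
        ∏ p ∈ Q with C.piecewise g f p ≠ r, x (C.piecewise g f p) =
      x r ^ (#C - 1) * ∏ p ∈ Q \ C, x (f p) := by
    intro g hg f hf
    have hC : Q.filter (C.piecewise g f · = r) = C := by
      refine filter_piecewise_eq (· = r) hCQ (fun p hp => ?_) fun p hp h => ?_
      · exact mem_singleton.mp ((mem_funsOn.mp hg).2 p hp)
      · have := (mem_attachments.mp hf).2.1 p hp
        rw [biUnion_union_biUnion_sdiff hCQ, h] at this
        exact disjoint_right.mp hr (mem_singleton_self r) this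
    rw [filter_not, hC]
    exact congrArg _ (prod_congr rfl fun p hp => by
      rw [piecewise_eq_of_notMem _ _ _ (mem_sdiff.mp hp).2])
  rw [sum_congr rfl fun g hg => sum_congr rfl (hlayer g hg), sum_const, card_funsOn,
    card_singleton, one_pow, one_smul, mul_sum]

end Attachments

section PartitionOf

variable {S : Finset ℕ} {P : Finset (Finset ℕ)}

theorem IsPartitionOf.pairwiseDisjoint (hP : IsPartitionOf S P) :
    (P : Set (Finset ℕ)).PairwiseDisjoint id :=
  fun p hp q hq => hP.2.1 p hp q hq

theorem IsPartitionOf.subset (hP : IsPartitionOf S P) {p : Finset ℕ} (hp : p ∈ P) : p ⊆ S :=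
  hP.2.2 ▸ subset_biUnion_of_mem id hp

theorem IsPartitionOf.card_filter_mem (hP : IsPartitionOf S P) {v : ℕ} (hv : v ∈ S) :
    #{p ∈ P | v ∈ p} = 1 := by
  obtain ⟨q, hq, hvq⟩ := mem_biUnion.mp (hP.2.2 ▸ hv)
  refine card_eq_one.mpr ⟨q, ext fun p => ⟨fun hp => ?_, fun hp => ?_⟩⟩
  · obtain ⟨hpP, hvp⟩ := mem_filter.mp hp
    by_contra hpq
    exact disjoint_left.mp (hP.2.1 p hpP q hq (by simpa using hpq)) hvp hvq
  · rw [mem_singleton.mp hp]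
    exact mem_filter.mpr ⟨hq, hvq⟩

end PartitionOf

def attachedEdges (P : Finset (Finset ℕ)) (f : Finset ℕ → ℕ) : Finset (Finset ℕ) :=
  P.image fun p => insert (f p) p

section AttachedEdges

variable {V : Finset ℕ} {r : ℕ} {P : Finset (Finset ℕ)}

theorem mem_attachments_singleton (hr : r ∈ V) (hP : IsPartitionOf (V.erase r) P)
    {f : Finset ℕ → ℕ} : f ∈ attachments {r} P ↔ (∀ p ∉ P, f p = 0) ∧ (∀ p ∈ P, f p ∈ V) ∧
      ∃ D : ℕ → ℕ, D r = 0 ∧ ∀ p ∈ P, ∀ v ∈ p, D v = D (f p) + 1 := by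
  rw [mem_attachments, hP.2.2, ← insert_eq, insert_erase hr]
  simp only [mem_singleton, forall_eq]
  rfl

variable {f : Finset ℕ → ℕ} {D : ℕ → ℕ}

theorem apply_notMem_of_depth (hD : ∀ p ∈ P, ∀ v ∈ p, D v = D (f p) + 1) {p : Finset ℕ}
    (hp : p ∈ P) : f p ∉ p := fun h => by have := hD p hp _ h; omega

/-- Two distinct parts would have to be attached to each other. -/
theorem injOn_insert_apply_of_depth {S : Finset ℕ} (hP : IsPartitionOf S P)
    (hD : ∀ p ∈ P, ∀ v ∈ p, D v = D (f p) + 1) : Set.InjOn (fun p => insert (f p) p) P := by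
  intro p hp q hq hpq
  by_contra hne
  have hdisj := hP.2.1 p hp q hq hne
  have key : ∀ {a b : Finset ℕ}, a ∈ P → Disjoint a b → insert (f a) a = insert (f b) b →
      f b ∈ a := by
    intro a b ha hab h
    obtain ⟨v, hv⟩ := hP.1 a ha
    rcases mem_insert.mp (h ▸ mem_insert_of_mem hv : v ∈ insert (f b) b) with rfl | hvb
    · exact hv
    · exact absurd hvb (disjoint_left.mp hab hv)
  have := hD p hp _ (key hp hdisj hpq)
  have := hD q hq _ (key hq hdisj.symm hpq.symm)
  omega

theorem hdeg_attachedEdges {S : Finset ℕ} (hP : IsPartitionOf S P)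
    (hD : ∀ p ∈ P, ∀ v ∈ p, D v = D (f p) + 1) (v : ℕ) :
    hdeg (attachedEdges P f) v = #{p ∈ P | f p = v} + #{p ∈ P | v ∈ p} := by
  rw [hdeg, attachedEdges, filter_image,
    card_image_of_injOn ((injOn_insert_apply_of_depth hP hD).mono (filter_subset _ _)),
    ← card_union_of_disjoint, ← filter_or]
  · exact congrArg card (filter_congr fun p _ => by simp [eq_comm])
  · exact disjoint_filter.mpr fun p hp h1 h2 => apply_notMem_of_depth hD hp (h1 ▸ h2)

variable (hr : r ∈ V) (hP : IsPartitionOf (V.erase r) P) (hfV : ∀ p ∈ P, f p ∈ V)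
  (hD0 : D r = 0) (hD : ∀ p ∈ P, ∀ v ∈ p, D v = D (f p) + 1)
include hr hP hfV hD0 hD

theorem reflTransGen_attachedEdges_and_hdist_le {v : ℕ} (hv : v ∈ V) :
    Relation.ReflTransGen (HAdj (attachedEdges P f)) r v ∧ hdist (attachedEdges P f) r v ≤ D v := by
  induction hn : D v using Nat.strong_induction_on generalizing v with
  | _ n ih =>
  by_cases hvr : v = r
  · subst hvr
    exact ⟨.refl, by simp [hdist_self]⟩
  obtain ⟨p, hp, hvp⟩ := mem_biUnion.mp (hP.2.2 ▸ mem_erase.mpr ⟨hvr, hv⟩)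
  have hDv := hD p hp v hvp
  obtain ⟨hreach, hle⟩ := ih _ (by omega) (hfV p hp) rfl
  have hadj : HAdj (attachedEdges P f) (f p) v :=
    ⟨fun h => apply_notMem_of_depth hD hp (h ▸ hvp), _, mem_image_of_mem _ hp, mem_insert_self _ _,
      mem_insert_of_mem hvp⟩
  exact ⟨hreach.tail hadj, (hdist_le_hdist_add_one hreach hadj).trans (by omega)⟩

theorem hdist_attachedEdges {v : ℕ} (hv : v ∈ V) : hdist (attachedEdges P f) r v = D v := by
  obtain ⟨hreach, hle⟩ := reflTransGen_attachedEdges_and_hdist_le hr hP hfV hD0 hD hv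
  refine le_antisymm hle ?_
  have hlip : ∀ a b, HAdj (attachedEdges P f) a b → D b ≤ D a + 1 := by
    rintro a b ⟨hab, e, he, hae, hbe⟩
    obtain ⟨p, hp, rfl⟩ := mem_image.mp he
    rcases mem_insert.mp hae with rfl | ha <;> rcases mem_insert.mp hbe with rfl | hb
    · exact absurd rfl hab
    · have := hD p hp b hb; omega
    · have := hD p hp a ha; omega
    · have := hD p hp a ha; have := hD p hp b hb; omega
  simpa [hD0] using le_add_hdist hlip hreach

theorem hdist_attachedEdges_lt {p : Finset ℕ} (hp : p ∈ P) {w : ℕ} (hw : w ∈ p) :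
    hdist (attachedEdges P f) r (f p) < hdist (attachedEdges P f) r w := by
  rw [hdist_attachedEdges hr hP hfV hD0 hD (hfV p hp),
    hdist_attachedEdges hr hP hfV hD0 hD (mem_of_mem_erase (hP.subset hp hw)), hD p hp w hw]
  omega

theorem isHypertree_attachedEdges : IsHypertree V (attachedEdges P f) := by
  have hinj := injOn_insert_apply_of_depth hP hD
  refine ⟨fun e he => ?_, fun v hv w hw => ?_, ?_⟩
  · obtain ⟨p, hp, rfl⟩ := mem_image.mp he
    refine ⟨insert_subset (hfV p hp) ((hP.subset hp).trans (erase_subset r V)), ?_⟩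
    rw [card_insert_of_notMem (apply_notMem_of_depth hD hp)]
    have := card_pos.mpr (hP.1 p hp)
    omega
  · have hreach := fun {u} (hu : u ∈ V) =>
      (reflTransGen_attachedEdges_and_hdist_le hr hP hfV hD0 hD hu).1
    exact (Std.Symm.symm _ _ (hreach hv)).trans (hreach hw)
  · have hsum : ∑ p ∈ P, #p = #(V.erase r) := by
      rw [← hP.2.2, card_biUnion hP.pairwiseDisjoint]
      rfl
    rw [attachedEdges, sum_image hinj, card_image_of_injOn hinj,
      sum_congr rfl fun p hp => card_insert_of_notMem (apply_notMem_of_depth hD hp),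
      sum_add_distrib, hsum, card_erase_of_mem hr, sum_const, smul_eq_mul, mul_one]
    have := card_pos.mpr ⟨r, hr⟩
    omega

theorem hasPruferPartition_attachedEdges : HasPruferPartition V r (attachedEdges P f) P := by
  have hinj := injOn_insert_apply_of_depth hP hD
  have hinv := hinj.leftInvOn_invFunOn
  refine ⟨isHypertree_attachedEdges hr hP hfV hD0 hD,
    fun e => f (Function.invFunOn (fun p => insert (f p) p) P e), ?_, ?_, ?_⟩
  · intro e he
    obtain ⟨p, hp, rfl⟩ := mem_image.mp he
    simp only [hinv hp]
    refine ⟨mem_insert_self _ _, fun w hw => ?_⟩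
    rcases mem_insert.mp hw with rfl | hw
    · exact le_rfl
    · exact (hdist_attachedEdges_lt hr hP hfV hD0 hD hp hw).le
  · rw [attachedEdges, image_image]
    refine (image_congr fun p hp => ?_).trans image_id |>.symm
    simp [hinv hp, erase_insert (apply_notMem_of_depth hD hp)]
  · intro e₁ he₁ e₂ he₂ h
    obtain ⟨p, hp, rfl⟩ := mem_image.mp he₁
    obtain ⟨q, hq, rfl⟩ := mem_image.mp he₂
    simp only [hinv hp, hinv hq, erase_insert (apply_notMem_of_depth hD hp),
      erase_insert (apply_notMem_of_depth hD hq)] at h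
    rw [h]

end AttachedEdges

section PruferBijection

variable {V : Finset ℕ} {r : ℕ} {P : Finset (Finset ℕ)}

theorem prod_pow_hdeg_attachedEdges {R : Type*} [CommSemiring R] (x : ℕ → R) (hr : r ∈ V)
    (hP : IsPartitionOf (V.erase r) P) {f : Finset ℕ → ℕ} (hf : f ∈ attachments {r} P) :
    ∏ v ∈ V, x v ^ (hdeg (attachedEdges P f) v - 1) =
      x r ^ (#{p ∈ P | f p = r} - 1) * ∏ p ∈ P with f p ≠ r, x (f p) := by
  obtain ⟨-, hfV, D, -, hD⟩ := (mem_attachments_singleton hr hP).mp hf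
  have hrP : ∀ p ∈ P, r ∉ p := fun p hp h => (mem_erase.mp (hP.subset hp h)).1 rfl
  rw [← mul_prod_erase V _ hr, hdeg_attachedEdges hP hD, filter_false_of_mem hrP,
    card_empty, add_zero]
  refine congrArg _ ?_
  rw [← prod_fiberwise_of_maps_to (t := V.erase r) (g := f) fun p hp =>
    mem_erase.mpr ⟨(mem_filter.mp hp).2, hfV p (mem_filter.mp hp).1⟩]
  refine prod_congr rfl fun v hv => ?_
  rw [hdeg_attachedEdges hP hD, hP.card_filter_mem hv, Nat.add_sub_cancel,
    prod_congr rfl fun p hp => by rw [(mem_filter.mp hp).2], prod_const, filter_filter]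
  exact congrArg (x v ^ #·) (filter_congr fun p _ =>
    ⟨fun h => ⟨h ▸ (mem_erase.mp hv).1, h⟩, fun h => h.2⟩)

theorem injOn_attachedEdges (hr : r ∈ V) (hP : IsPartitionOf (V.erase r) P) :
    Set.InjOn (attachedEdges P) (attachments {r} P) := by
  intro f hf g hg hfg
  obtain ⟨hf0, hfV, Df, hDf0, hDf⟩ := (mem_attachments_singleton hr hP).mp hf
  obtain ⟨hg0, hgV, Dg, hDg0, hDg⟩ := (mem_attachments_singleton hr hP).mp hg
  funext p
  by_cases hp : p ∈ P
  · have hpE : insert (f p) p ∈ attachedEdges P f := mem_image_of_mem _ hp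
    rw [hfg] at hpE
    obtain ⟨q, hq, hqp⟩ := mem_image.mp hpE
    have hfpq : f p = g q := by
      by_contra hne
      have h1 : f p ∈ q := (mem_insert.mp (hqp ▸ mem_insert_self (f p) p)).resolve_left hne
      have h2 : g q ∈ p := (mem_insert.mp (hqp.symm ▸ mem_insert_self (g q) q)).resolve_left
        (Ne.symm hne)
      have := hdist_attachedEdges_lt hr hP hfV hDf0 hDf hp h2
      have := hdist_attachedEdges_lt hr hP hgV hDg0 hDg hq h1
      rw [← hfg] at this
      omega
    have hpq : p = q := by
      rw [← erase_insert (apply_notMem_of_depth hDf hp),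
        ← erase_insert (apply_notMem_of_depth hDg hq), hqp, hfpq]
    rw [hfpq, hpq]
  · rw [hf0 p hp, hg0 p hp]

theorem exists_attachment_of_hasPruferPartition (hr : r ∈ V) (hP : IsPartitionOf (V.erase r) P)
    {E : Finset (Finset ℕ)} (hE : HasPruferPartition V r E P) :
    ∃ f ∈ attachments {r} P, attachedEdges P f = E := by
  obtain ⟨hT, m, hm, hPm, hinj⟩ := hE
  choose! e he hep using fun p (hp : p ∈ P) => mem_image.mp (hPm ▸ hp)
  have hins : ∀ p ∈ P, insert (m (e p)) p = e p := fun p hp => by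
    have := insert_erase (hm _ (he p hp)).1
    rwa [hep p hp] at this
  refine ⟨P.piecewise (fun p => m (e p)) (fun _ => 0), (mem_attachments_singleton hr hP).mpr
    ⟨fun p hp => piecewise_eq_of_notMem _ _ _ hp, fun p hp => ?_, hdist E r, hdist_self r,
      fun p hp v hv => ?_⟩, ?_⟩
  · rw [piecewise_eq_of_mem _ _ _ hp]
    exact (hT.1 _ (he p hp)).1 (hm _ (he p hp)).1
  · rw [piecewise_eq_of_mem _ _ _ hp]
    have hv' : v ∈ (e p).erase (m (e p)) := (hep p hp).symm ▸ hv
    exact hT.hdist_eq_add_one_of_isMarked hr (he p hp) (hm _ (he p hp)) (mem_of_mem_erase hv')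
      (ne_of_mem_erase hv')
  · ext e'
    rw [attachedEdges, mem_image]
    constructor
    · rintro ⟨p, hp, rfl⟩
      rw [piecewise_eq_of_mem _ _ _ hp, hins p hp]
      exact he p hp
    · intro he'
      have hp : e'.erase (m e') ∈ P := hPm ▸ mem_image_of_mem _ he'
      refine ⟨_, hp, ?_⟩
      rw [piecewise_eq_of_mem _ _ _ hp, hins _ hp]
      exact hinj (he _ hp) he' (hep _ hp)

theorem sum_hasPruferPartition_eq_sum_attachments {M : Type*} [AddCommMonoid M]
    [DecidablePred fun E => HasPruferPartition V r E P] (hr : r ∈ V)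
    (hP : IsPartitionOf (V.erase r) P) (F : Finset (Finset ℕ) → M) :
    ∑ E ∈ V.powerset.powerset with HasPruferPartition V r E P, F E =
      ∑ f ∈ attachments {r} P, F (attachedEdges P f) := by
  refine (sum_nbij (attachedEdges P) (fun f hf => ?_) (injOn_attachedEdges hr hP)
    (fun E hE => ?_) fun _ _ => rfl).symm
  · obtain ⟨-, hfV, D, hD0, hD⟩ := (mem_attachments_singleton hr hP).mp hf
    have hE := hasPruferPartition_attachedEdges hr hP hfV hD0 hD
    exact mem_filter.mpr ⟨mem_powerset.mpr fun e he => mem_powerset.mpr (hE.1.1 e he).1, hE⟩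
  · obtain ⟨f, hf, rfl⟩ := exists_attachment_of_hasPruferPartition hr hP (mem_filter.mp hE).2
    exact ⟨f, hf, rfl⟩

end PruferBijection

open scoped Classical in
/-- for a fixed vertex set `V = V' ∪ {r}` and a fixed partition
`P` of `V' = V \ {r}` into `k` non-empty parts,
`∑_T ∏_{v ∈ V} x_v ^ (deg_T v - 1) = (∑_{v ∈ V} x_v) ^ (k - 1)`, the sum
ranging over all `r`-rooted hypertrees with vertex set `V` and Prüfer
partition `P`. -/
theorem stmt18 (R : Type*) [CommSemiring R] (x : ℕ → R)
    (V : Finset ℕ) (r : ℕ) (hr : r ∈ V)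
    (P : Finset (Finset ℕ)) (hP : IsPartitionOf (V.erase r) P) (k : ℕ)
    (hk : P.card = k) :
    ∑ E ∈ V.powerset.powerset.filter (fun E => HasPruferPartition V r E P),
        ∏ v ∈ V, x v ^ (hdeg E v - 1) =
      (∑ v ∈ V, x v) ^ (k - 1) := by
  have hrP : Disjoint (P.biUnion id) {r} := by
    rw [hP.2.2]
    exact disjoint_singleton_right.mpr (notMem_erase r V)
  rw [sum_hasPruferPartition_eq_sum_attachments hr hP,
    sum_congr rfl fun f hf => prod_pow_hdeg_attachedEdges x hr hP hf,
    sum_pow_mul_prod_attachments_singleton x r hP.pairwiseDisjoint hrP, hP.2.2,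
    add_sum_erase V x hr, hk]
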